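/- arXiv:2403.04347 — 3 statements merged into one kernel-verified Lean document; each statement's English description precedes it below -/
import Mathlib

section
/- Let γ > 2 and define F_γ : L¹(ℝ) → ℝ ∪ {+∞} by F_γ(m) = ‖m̂ − exp‖²_{L²_γ} if m̂ − exp ∈ L²_γ(ℝ), and +∞ otherwise (where exp(k) = e^k). Then F_γ is strictly convex and lower semicontinuous on L¹(ℝ). -/
/-! Pointwise, `‖t a + (1 - t) b‖² + t (1 - t) ‖a - b‖² = t ‖a‖² + (1 - t) ‖b‖²`. Taking
`a = m̂₁ - exp`, `b = m̂₂ - exp` and integrating against `e^{-γk} dk` turns this into an identity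
for `F_γ` whose defect term `t (1 - t) ‖m̂₁ - m̂₂‖²_{L²_γ}` gives convexity, and strict convexity
because it vanishes only when `m̂₁ = m̂₂`, i.e. `m₁ = m₂` by injectivity of the Fourier transform
on `L¹`. Since `|m̂(k)| ≤ ‖m‖₁`, each integrand is continuous in `m`, and Fatou's lemma gives
lower semicontinuity. -/

open MeasureTheory Complex
open scoped ENNReal

noncomputable def FT (f : ℝ → ℂ) : ℝ → ℂ :=
  fun k => ∫ x : ℝ, f x * Complex.exp (-Complex.I * k * x)

/-- `F_γ(m) = ‖m̂ − exp‖²_{L²_γ}`, with value `+∞` encoded via the lower integral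
(the value is finite exactly when `m̂ − exp ∈ L²_γ`). -/
noncomputable def Fgamma (γ : ℝ) (m : Lp ℂ 1 (volume : Measure ℝ)) : ℝ≥0∞ :=
  ∫⁻ k : ℝ, (‖FT (⇑m) k - Real.exp k‖₊ : ℝ≥0∞) ^ 2 * ENNReal.ofReal (Real.exp (-γ * k))

open Filter
open scoped FourierTransform SchwartzMap Real

theorem lowerSemicontinuous_lintegral {X α : Type*} [TopologicalSpace X] [FirstCountableTopology X]
    [MeasurableSpace α] {μ : Measure α} {f : X → α → ℝ≥0∞} (hf_meas : ∀ x, AEMeasurable (f x) μ)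
    (hf : ∀ a, LowerSemicontinuous fun x => f x a) :
    LowerSemicontinuous fun x => ∫⁻ a, f x a ∂μ :=
  lowerSemicontinuous_iff_le_liminf.2 fun x =>
    (lintegral_mono fun a => (hf a).le_liminf x).trans (lintegral_liminf_le' hf_meas)

theorem norm_convexComb_sq_add {E : Type*} [NormedAddCommGroup E] [InnerProductSpace ℝ E]
    (a b : E) (t : ℝ) :
    ‖t • a + (1 - t) • b‖ ^ 2 + t * (1 - t) * ‖a - b‖ ^ 2 = t * ‖a‖ ^ 2 + (1 - t) * ‖b‖ ^ 2 := by
  rw [norm_add_sq_real, norm_sub_sq_real, norm_smul, norm_smul, inner_smul_left, inner_smul_right]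
  simp only [Real.norm_eq_abs, mul_pow, sq_abs, RCLike.conj_to_real]
  ring

theorem enorm_convexComb_sq_add {E : Type*} [NormedAddCommGroup E] [InnerProductSpace ℝ E]
    (a b : E) {t : ℝ} (ht₀ : 0 ≤ t) (ht₁ : t ≤ 1) :
    ‖t • a + (1 - t) • b‖ₑ ^ 2 + ENNReal.ofReal (t * (1 - t)) * ‖a - b‖ₑ ^ 2 =
      ENNReal.ofReal t * ‖a‖ₑ ^ 2 + ENNReal.ofReal (1 - t) * ‖b‖ₑ ^ 2 := by
  have h₁ : 0 ≤ 1 - t := by linarith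
  simp only [← ofReal_norm, ← ENNReal.ofReal_pow (norm_nonneg _)]
  rw [← ENNReal.ofReal_mul (by positivity), ← ENNReal.ofReal_mul ht₀, ← ENNReal.ofReal_mul h₁,
    ← ENNReal.ofReal_add (by positivity) (by positivity),
    ← ENNReal.ofReal_add (by positivity) (by positivity), norm_convexComb_sq_add]

theorem lintegral_convexComb_sq_add {α E : Type*} [MeasurableSpace α] {μ : Measure α}
    [NormedAddCommGroup E] [InnerProductSpace ℝ E] {a b : α → E}
    (ha : AEStronglyMeasurable a μ) (hb : AEStronglyMeasurable b μ) {t : ℝ}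
    (ht₀ : 0 ≤ t) (ht₁ : t ≤ 1) :
    ∫⁻ x, ‖t • a x + (1 - t) • b x‖ₑ ^ 2 ∂μ +
        ENNReal.ofReal (t * (1 - t)) * ∫⁻ x, ‖a x - b x‖ₑ ^ 2 ∂μ =
      ENNReal.ofReal t * ∫⁻ x, ‖a x‖ₑ ^ 2 ∂μ + ENNReal.ofReal (1 - t) * ∫⁻ x, ‖b x‖ₑ ^ 2 ∂μ := by
  have hsq : ∀ {c : α → E}, AEStronglyMeasurable c μ → AEMeasurable (fun x => ‖c x‖ₑ ^ 2) μ :=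
    fun hc => hc.enorm.pow_const 2
  rw [← lintegral_const_mul' _ _ ENNReal.ofReal_ne_top,
    ← lintegral_const_mul' _ _ ENNReal.ofReal_ne_top,
    ← lintegral_const_mul' _ _ ENNReal.ofReal_ne_top,
    ← lintegral_add_left' (hsq (c := fun x => t • a x + (1 - t) • b x)
      ((ha.const_smul t).add (hb.const_smul (1 - t)))),
    ← lintegral_add_left' ((hsq ha).const_mul _)]
  exact lintegral_congr fun x => enorm_convexComb_sq_add (a x) (b x) ht₀ ht₁

theorem MeasureTheory.Lp.eq_zero_of_fourier_eq_zero {V F : Type*} [NormedAddCommGroup V]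
    [InnerProductSpace ℝ V] [FiniteDimensional ℝ V] [MeasurableSpace V] [BorelSpace V]
    [NormedAddCommGroup F] [NormedSpace ℂ F] [CompleteSpace F] {f : Lp F 1 (volume : Measure V)}
    (hf : 𝓕 (f : V → F) = 0) : f = 0 := by
  suffices h : Lp.toTemperedDistributionCLM F volume 1 f = 0 by
    simpa using (LinearMap.ker_eq_bot'.1 Lp.ker_toTemperedDistributionCLM_eq_bot) f h
  ext g
  -- `∫ 𝓕 h • f = ∫ h • 𝓕 f = 0`, and every Schwartz function is some `𝓕 h`.
  obtain ⟨h, rfl⟩ : ∃ h : 𝓢(V, ℂ), 𝓕 h = g := ⟨𝓕⁻ g, FourierTransform.fourier_fourierInv_eq g⟩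
  have := VectorFourier.integral_fourierIntegral_smul_eq_flip (L := innerₗ V)
    Real.continuous_fourierChar continuous_inner (h.integrable (μ := volume))
    (L1.integrable_coeFn f)
  rw [flip_innerₗ] at this
  change ∫ ξ, 𝓕 (⇑h) ξ • f ξ = ∫ x, h x • 𝓕 (f : V → F) x at this
  rw [Lp.toTemperedDistributionCLM_apply, Lp.toTemperedDistribution_apply, SchwartzMap.fourier_coe,
    this, hf]
  simp

theorem FT_eq_fourier (f : ℝ → ℂ) (k : ℝ) : FT f k = 𝓕 f (k / (2 * π)) := by
  rw [Real.fourier_real_eq_integral_exp_smul, FT]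
  congr 1 with x
  rw [smul_eq_mul, mul_comm]
  congr 2
  push_cast
  field_simp

theorem continuous_FT {f : ℝ → ℂ} (hf : Integrable f) : Continuous (FT f) := by
  simp only [funext (FT_eq_fourier f)]
  exact (VectorFourier.fourierIntegral_continuous Real.continuous_fourierChar
    continuous_inner hf).comp (continuous_id.div_const _)

theorem continuous_FT_sub_exp (m : Lp ℂ 1 (volume : Measure ℝ)) :
    Continuous fun k => FT m k - Real.exp k :=
  (continuous_FT (L1.integrable_coeFn m)).sub (by fun_prop)

theorem MeasureTheory.Integrable.mul_cexp_neg_I_mul {f : ℝ → ℂ} (hf : Integrable f) (k : ℝ) :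
    Integrable fun x => f x * cexp (-I * k * x) :=
  hf.mul_bdd (c := 1) (by fun_prop) (ae_of_all _ fun x => by
    rw [norm_exp]; simp)

noncomputable def FTCLM (k : ℝ) : Lp ℂ 1 (volume : Measure ℝ) →L[ℂ] ℂ :=
  LinearMap.mkContinuous
    { toFun := fun m => FT m k
      map_add' := fun m m' => by
        rw [FT, FT, FT, ← integral_add ((L1.integrable_coeFn m).mul_cexp_neg_I_mul k)
          ((L1.integrable_coeFn m').mul_cexp_neg_I_mul k)]
        refine integral_congr_ae ?_
        filter_upwards [Lp.coeFn_add m m'] with x hx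
        rw [hx, Pi.add_apply, add_mul]
      map_smul' := fun c m => by
        rw [RingHom.id_apply, smul_eq_mul, FT, FT, ← integral_const_mul]
        refine integral_congr_ae ?_
        filter_upwards [Lp.coeFn_smul c m] with x hx
        rw [hx, Pi.smul_apply, smul_eq_mul, mul_assoc] }
    1 fun m => by
      rw [one_mul, L1.norm_eq_integral_norm]
      refine (norm_integral_le_integral_norm _).trans_eq (integral_congr_ae ?_)
      refine ae_of_all _ fun x => ?_
      simp [norm_exp]

theorem FTCLM_apply (k : ℝ) (m : Lp ℂ 1 (volume : Measure ℝ)) : FTCLM k m = FT m k := rfl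

noncomputable def weightedVolume (γ : ℝ) : Measure ℝ :=
  volume.withDensity fun k => ENNReal.ofReal (Real.exp (-γ * k))

theorem Fgamma_eq_lintegral (γ : ℝ) (m : Lp ℂ 1 (volume : Measure ℝ)) :
    Fgamma γ m = ∫⁻ k, ‖FT m k - Real.exp k‖ₑ ^ 2 ∂weightedVolume γ := by
  rw [weightedVolume, lintegral_withDensity_eq_lintegral_mul_non_measurable _ (by fun_prop)
    (ae_of_all _ fun _ => ENNReal.ofReal_lt_top), Fgamma]
  simp only [Pi.mul_apply, mul_comm, enorm_eq_nnnorm]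

theorem Fgamma_convexComb_add (γ : ℝ) {t : ℝ} (ht₀ : 0 ≤ t) (ht₁ : t ≤ 1)
    (m₁ m₂ : Lp ℂ 1 (volume : Measure ℝ)) :
    Fgamma γ ((t : ℂ) • m₁ + ((1 - t : ℝ) : ℂ) • m₂) +
        ENNReal.ofReal (t * (1 - t)) * ∫⁻ k, ‖FT m₁ k - FT m₂ k‖ₑ ^ 2 ∂weightedVolume γ =
      ENNReal.ofReal t * Fgamma γ m₁ + ENNReal.ofReal (1 - t) * Fgamma γ m₂ := by
  have hcomb : ∀ k, FT ⇑((t : ℂ) • m₁ + ((1 - t : ℝ) : ℂ) • m₂) k - Real.exp k =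
      t • (FT m₁ k - Real.exp k) + (1 - t) • (FT m₂ k - Real.exp k) := fun k => by
    simp only [← FTCLM_apply, map_add, map_smul, smul_eq_mul, real_smul]
    push_cast
    ring
  have hmeas : ∀ m : Lp ℂ 1 (volume : Measure ℝ),
      AEStronglyMeasurable (fun k => FT m k - Real.exp k) (weightedVolume γ) := fun m =>
    (continuous_FT_sub_exp m).aestronglyMeasurable
  simp only [Fgamma_eq_lintegral, hcomb]
  convert lintegral_convexComb_sq_add (hmeas m₁) (hmeas m₂) ht₀ ht₁ using 5
  rw [sub_sub_sub_cancel_right]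

theorem lintegral_enorm_FT_sub_sq_ne_zero (γ : ℝ) {m₁ m₂ : Lp ℂ 1 (volume : Measure ℝ)}
    (hne : m₁ ≠ m₂) : ∫⁻ k, ‖FT m₁ k - FT m₂ k‖ₑ ^ 2 ∂weightedVolume γ ≠ 0 := by
  intro h
  have hcont : Continuous fun k => FT (m₁ - m₂ : Lp ℂ 1 volume) k :=
    continuous_FT (L1.integrable_coeFn _)
  have hsub : ∀ k, FT m₁ k - FT m₂ k = FT (m₁ - m₂ : Lp ℂ 1 volume) k := fun k => by
    simp only [← FTCLM_apply, map_sub]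
  simp only [hsub] at h
  rw [lintegral_eq_zero_iff (hcont.measurable.enorm.pow_const 2), weightedVolume,
    EventuallyEq, ae_withDensity_iff (by fun_prop)] at h
  have hae : (fun k => FT (m₁ - m₂ : Lp ℂ 1 volume) k) =ᵐ[volume] 0 :=
    h.mono fun k hk => by simpa using hk (by simpa using Real.exp_pos _)
  have hFT : FT (m₁ - m₂ : Lp ℂ 1 volume) = 0 := (hcont.ae_eq_iff_eq volume continuous_const).1 hae
  refine hne (sub_eq_zero.1 (Lp.eq_zero_of_fourier_eq_zero (funext fun ξ => ?_)))
  have := FT_eq_fourier (m₁ - m₂ : Lp ℂ 1 volume) (2 * π * ξ)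
  rw [hFT, mul_div_cancel_left₀ _ (by positivity)] at this
  exact this.symm

theorem lowerSemicontinuous_Fgamma (γ : ℝ) : LowerSemicontinuous (Fgamma γ) := by
  simp only [funext (Fgamma_eq_lintegral γ)]
  refine lowerSemicontinuous_lintegral (fun m => ?_) (fun k => ?_)
  · exact ((continuous_FT_sub_exp m).measurable.enorm.pow_const 2).aemeasurable
  · exact ((ENNReal.continuous_pow 2).comp
      ((FTCLM k).continuous.sub continuous_const).enorm).lowerSemicontinuous

theorem Fgamma_strictConvex_lsc_general (γ : ℝ) :
    (∀ m₁ m₂ : Lp ℂ 1 (volume : Measure ℝ), ∀ t : ℝ, 0 ≤ t → t ≤ 1 →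
      Fgamma γ ((t : ℂ) • m₁ + ((1 - t : ℝ) : ℂ) • m₂) ≤
        ENNReal.ofReal t * Fgamma γ m₁ + ENNReal.ofReal (1 - t) * Fgamma γ m₂) ∧
    (∀ m₁ m₂ : Lp ℂ 1 (volume : Measure ℝ), m₁ ≠ m₂ →
      Fgamma γ m₁ < ⊤ → Fgamma γ m₂ < ⊤ → ∀ t : ℝ, 0 < t → t < 1 →
      Fgamma γ ((t : ℂ) • m₁ + ((1 - t : ℝ) : ℂ) • m₂) <
        ENNReal.ofReal t * Fgamma γ m₁ + ENNReal.ofReal (1 - t) * Fgamma γ m₂) ∧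
    LowerSemicontinuous (Fgamma γ) := by
  refine ⟨fun m₁ m₂ t ht₀ ht₁ => ?_, fun m₁ m₂ hne h₁ h₂ t ht₀ ht₁ => ?_,
    lowerSemicontinuous_Fgamma γ⟩
  · rw [← Fgamma_convexComb_add γ ht₀ ht₁]
    exact le_self_add
  · have hid := Fgamma_convexComb_add γ ht₀.le ht₁.le m₁ m₂
    have hfin : ENNReal.ofReal t * Fgamma γ m₁ + ENNReal.ofReal (1 - t) * Fgamma γ m₂ ≠ ⊤ := by
      finiteness
    rw [← hid]
    refine ENNReal.lt_add_right (ne_top_of_le_ne_top hfin (hid ▸ le_self_add)) ?_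
    refine mul_ne_zero ?_ (lintegral_enorm_FT_sub_sq_ne_zero γ hne)
    simpa using mul_pos ht₀ (sub_pos.2 ht₁)

theorem Fgamma_strictConvex_lsc (γ : ℝ) (hγ : 2 < γ) :
    (∀ m₁ m₂ : Lp ℂ 1 (volume : Measure ℝ), ∀ t : ℝ, 0 ≤ t → t ≤ 1 →
      Fgamma γ ((t : ℂ) • m₁ + ((1 - t : ℝ) : ℂ) • m₂) ≤
        ENNReal.ofReal t * Fgamma γ m₁ + ENNReal.ofReal (1 - t) * Fgamma γ m₂) ∧
    (∀ m₁ m₂ : Lp ℂ 1 (volume : Measure ℝ), m₁ ≠ m₂ →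
      Fgamma γ m₁ < ⊤ → Fgamma γ m₂ < ⊤ → ∀ t : ℝ, 0 < t → t < 1 →
      Fgamma γ ((t : ℂ) • m₁ + ((1 - t : ℝ) : ℂ) • m₂) <
        ENNReal.ofReal t * Fgamma γ m₁ + ENNReal.ofReal (1 - t) * Fgamma γ m₂) ∧
    LowerSemicontinuous (Fgamma γ) :=
  Fgamma_strictConvex_lsc_general γ
end

section
/- Let g ∈ L¹(ℝ) be an even function. Then η_g(φ) := ∫_0^∞ [g(k)/(k(cosh(2k)−1))]·(φ(k) − φ(−k) − 2φ'(0)k) dk defines a tempered distribution on ℝ. Moreover, for any y with |y| ≤ 2, the map φ ↦ η_g(e^{-y(·)} φ) also defines a tempered distribution. -/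
/-!
Put `F x = exp (-y x) • φ x`; the bracket in the integrand is `F k - F (-k) - 2 k F' 0`.
For `k ≤ 1`, three applications of the mean value theorem to `F t - F (-t) - 2 t F' 0`, whose
first two derivatives vanish at `0`, bound it by `2 k³ sup_{[-k,k]} ‖F'''‖`, and Leibniz's rule
with `|y| ≤ 2` bounds `F'''` by `27 e²` times the sup of the first four derivatives of `φ`.
For `k ≥ 1` the crude bound `8 k e^{2k}` suffices. Since `k (cosh 2k - 1) = 2 k sinh² k`
dominates both `2 k³` and `k e^{2k} / 4`, the integrand is bounded by `|g k|` times a Schwartz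
seminorm of `φ`, and integrability of `g` makes the integral a continuous linear functional.
-/

open MeasureTheory Set
open scoped SchwartzMap

noncomputable section

section CentralDifference

variable {E : Type*} [NormedAddCommGroup E] [NormedSpace ℝ E]

theorem ContDiff.hasDerivAt_iteratedDeriv {f : ℝ → E} {n : WithTop ℕ∞} (hf : ContDiff ℝ n f)
    {m : ℕ} (hm : m < n) (x : ℝ) :
    HasDerivAt (iteratedDeriv m f) (iteratedDeriv (m + 1) f x) x := by
  rw [iteratedDeriv_succ]
  exact (hf.differentiable_iteratedDeriv m hm x).hasDerivAt

theorem norm_le_mul_of_hasDerivAt_of_eq_zero {G G' : ℝ → E} {k C : ℝ} (hk : 0 ≤ k)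
    (h0 : G 0 = 0) (hG : ∀ t, HasDerivAt G (G' t) t) (hC : ∀ t ∈ Icc 0 k, ‖G' t‖ ≤ C) :
    ∀ t ∈ Icc 0 k, ‖G t‖ ≤ C * k := by
  intro t ht
  have hC0 : 0 ≤ C := (norm_nonneg _).trans (hC 0 ⟨le_rfl, hk⟩)
  have := norm_image_sub_le_of_norm_deriv_le_segment' (fun t _ => (hG t).hasDerivWithinAt)
    (fun t ht => hC t (Ico_subset_Icc_self ht)) t ht
  rw [h0, sub_zero, sub_zero] at this
  exact this.trans (mul_le_mul_of_nonneg_left ht.2 hC0)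

def centralDiffRemainder (f : ℝ → E) (k : ℝ) : E := f k - f (-k) - (2 * k) • deriv f 0

theorem centralDiffRemainder_add {f g : ℝ → E} (hf : DifferentiableAt ℝ f 0)
    (hg : DifferentiableAt ℝ g 0) :
    centralDiffRemainder (f + g) = centralDiffRemainder f + centralDiffRemainder g := by
  ext k
  simp only [centralDiffRemainder, Pi.add_apply, deriv_add hf hg, smul_add]
  abel

theorem centralDiffRemainder_const_smul {R : Type*} [Semiring R] [Module R E]
    [SMulCommClass ℝ R E] [ContinuousConstSMul R E] (c : R) {f : ℝ → E}
    (hf : DifferentiableAt ℝ f 0) :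
    centralDiffRemainder (c • f) = c • centralDiffRemainder f := by
  ext k
  simp only [centralDiffRemainder, Pi.smul_apply, smul_sub]
  rw [deriv_const_smul c hf, smul_comm]

theorem norm_centralDiffRemainder_le {f : ℝ → E} (hf : ContDiff ℝ 3 f) {k M : ℝ} (hk : 0 ≤ k)
    (hM : ∀ x ∈ Icc (-k) k, ‖iteratedDeriv 3 f x‖ ≤ M) :
    ‖centralDiffRemainder f k‖ ≤ 2 * M * k ^ 3 := by
  set D := fun m => iteratedDeriv m f
  have hD : ∀ m < 3, ∀ x, HasDerivAt (D m) (D (m + 1) x) x := fun m hm =>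
    hf.hasDerivAt_iteratedDeriv (by exact_mod_cast hm)
  have hDneg : ∀ m < 3, ∀ x, HasDerivAt (fun t => D m (-t)) (-D (m + 1) (-x)) x := fun m hm x => by
    simpa [Function.comp_def] using (hD m hm (-x)).scomp x (hasDerivAt_neg x)
  have hsymm : ∀ t ∈ Icc 0 k, t ∈ Icc (-k) k ∧ -t ∈ Icc (-k) k := fun t ht =>
    ⟨⟨by linarith [ht.1], ht.2⟩, ⟨by linarith [ht.2], by linarith [ht.1]⟩⟩
  have h2 : ∀ t ∈ Icc 0 k, ‖D 2 t - D 2 (-t)‖ ≤ 2 * M * k :=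
    norm_le_mul_of_hasDerivAt_of_eq_zero hk (by simp)
      (fun t => (hD 2 (by norm_num) t).sub (hDneg 2 (by norm_num) t)) fun t ht => by
        rw [sub_neg_eq_add, two_mul]
        exact (norm_add_le _ _).trans (add_le_add (hM t (hsymm t ht).1) (hM _ (hsymm t ht).2))
  have h1 : ∀ t ∈ Icc 0 k, ‖D 1 t + D 1 (-t) - (2 : ℝ) • D 1 0‖ ≤ 2 * M * k * k :=
    norm_le_mul_of_hasDerivAt_of_eq_zero hk (by simp [two_smul])
      (fun t => by
        simpa [sub_eq_add_neg] using
          ((hD 1 (by norm_num) t).add (hDneg 1 (by norm_num) t)).sub_const ((2 : ℝ) • D 1 0))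
      h2
  have h0 : ∀ t ∈ Icc 0 k, ‖centralDiffRemainder f t‖ ≤ 2 * M * k * k * k := by
    refine norm_le_mul_of_hasDerivAt_of_eq_zero hk (by simp [centralDiffRemainder])
      (fun t => ?_) h1
    have hlin : HasDerivAt (fun t : ℝ => (2 * t) • deriv f 0) ((2 : ℝ) • D 1 0) t := by
      simpa [D, iteratedDeriv_one] using ((hasDerivAt_id t).const_mul 2).smul_const (deriv f 0)
    convert ((hD 0 (by norm_num) t).sub (hDneg 0 (by norm_num) t)).sub hlin using 1
    · rfl
    · simp only [zero_add, sub_neg_eq_add]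
  calc ‖centralDiffRemainder f k‖ ≤ 2 * M * k * k * k := h0 k ⟨hk, le_rfl⟩
    _ = 2 * M * k ^ 3 := by ring

theorem norm_iteratedDeriv_exp_mul_smul_le {f : ℝ → E} {n : ℕ} (hf : ContDiff ℝ n f)
    {c x B : ℝ} (hB : ∀ i ≤ n, ‖iteratedDeriv i f x‖ ≤ B) :
    ‖iteratedDeriv n (fun t => Real.exp (c * t) • f t) x‖ ≤
      (|c| + 1) ^ n * Real.exp (c * x) * B := by
  have hexp : ContDiff ℝ n fun t => Real.exp (c * t) := by fun_prop
  rw [← norm_iteratedFDeriv_eq_norm_iteratedDeriv]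
  refine (norm_iteratedFDeriv_smul_le hexp hf x le_rfl).trans ?_
  simp only [norm_iteratedFDeriv_eq_norm_iteratedDeriv, iteratedDeriv_exp_const_mul, add_pow,
    one_pow, mul_one, Finset.sum_mul]
  refine Finset.sum_le_sum fun i hi => ?_
  rw [norm_mul, Real.norm_eq_abs, Real.norm_eq_abs, abs_pow, abs_of_pos (Real.exp_pos _)]
  calc (n.choose i : ℝ) * (|c| ^ i * Real.exp (c * x)) * ‖iteratedDeriv (n - i) f x‖
      ≤ (n.choose i : ℝ) * (|c| ^ i * Real.exp (c * x)) * B := by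
        gcongr; exact hB (n - i) (Nat.sub_le n i)
    _ = _ := by ring

end CentralDifference

theorem two_mul_pow_three_le_mul_cosh_two_mul_sub_one {k : ℝ} (hk : 0 ≤ k) :
    2 * k ^ 3 ≤ k * (Real.cosh (2 * k) - 1) := by
  have hsinh : k ≤ Real.sinh k := Real.self_le_sinh_iff.mpr hk
  rw [Real.cosh_two_mul, Real.cosh_sq]
  nlinarith [mul_le_mul hsinh hsinh hk (hk.trans hsinh)]

theorem exp_two_mul_le_four_mul_cosh_two_mul_sub_one {k : ℝ} (hk : 1 ≤ k) :
    Real.exp (2 * k) ≤ 4 * (Real.cosh (2 * k) - 1) := by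
  have h4 : 4 ≤ Real.exp (2 * k) := by
    rw [two_mul, Real.exp_add]
    nlinarith [Real.add_one_le_exp k]
  rw [Real.cosh_eq]
  nlinarith [Real.exp_pos (-(2 * k))]

theorem SchwartzMap.norm_iteratedDeriv_le_finset_sup {𝕜 F : Type*} [NormedField 𝕜]
    [NormedAddCommGroup F] [NormedSpace ℝ F] [NormedSpace 𝕜 F] [SMulCommClass ℝ 𝕜 F]
    (φ : 𝓢(ℝ, F)) {i n : ℕ} (hi : i ≤ n) (x : ℝ) :
    ‖iteratedDeriv i φ x‖ ≤ (({0} ×ˢ Finset.range (n + 1)).sup (schwartzSeminormFamily 𝕜 ℝ F)) φ :=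
  calc ‖iteratedDeriv i φ x‖ ≤ SchwartzMap.seminorm 𝕜 0 i φ := by
        simpa using SchwartzMap.le_seminorm' 𝕜 0 i φ x
    _ ≤ _ := Seminorm.le_finset_sup_apply (p := schwartzSeminormFamily 𝕜 ℝ F) (i := (0, i))
        (by simpa [Nat.lt_succ_iff] using hi)

theorem SchwartzMap.norm_centralDiffRemainder_exp_smul_le {𝕜 F : Type*} [NormedField 𝕜]
    [NormedAddCommGroup F] [NormedSpace ℝ F] [NormedSpace 𝕜 F] [SMulCommClass ℝ 𝕜 F]
    (φ : 𝓢(ℝ, F)) {y k : ℝ} (hy : |y| ≤ 2) (hk : 0 ≤ k) :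
    ‖centralDiffRemainder (fun x => Real.exp (-y * x) • φ x) k‖ ≤
      27 * Real.exp 2 * (k * (Real.cosh (2 * k) - 1)) *
        (({0} ×ˢ Finset.range 4).sup (schwartzSeminormFamily 𝕜 ℝ F)) φ := by
  set p := (({0} ×ˢ Finset.range 4).sup (schwartzSeminormFamily 𝕜 ℝ F)) φ
  set f := fun x => Real.exp (-y * x) • φ x
  have hp : 0 ≤ p := apply_nonneg _ _
  have hF : ContDiff ℝ 3 f :=
    (by fun_prop : ContDiff ℝ 3 fun x => Real.exp (-y * x)).smul (φ.smooth 3)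
  have hD : ∀ n ≤ 3, ∀ x ∈ Icc (-k) k, ‖iteratedDeriv n f x‖ ≤ 3 ^ n * Real.exp (2 * k) * p := by
    intro n hn x hx
    have hyx : -y * x ≤ 2 * k :=
      calc -y * x ≤ |y| * |x| := by rw [neg_mul, ← abs_mul]; exact neg_le_abs _
        _ ≤ 2 * k := mul_le_mul hy (abs_le.mpr hx) (abs_nonneg _) (by norm_num)
    refine (norm_iteratedDeriv_exp_mul_smul_le (φ.smooth n)
      fun i hi => φ.norm_iteratedDeriv_le_finset_sup (𝕜 := 𝕜) (hi.trans hn) x).trans ?_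
    gcongr
    rw [abs_neg]; linarith
  have hcosh := two_mul_pow_three_le_mul_cosh_two_mul_sub_one hk
  rcases le_total k 1 with hk1 | hk1
  · calc ‖centralDiffRemainder f k‖ ≤ 2 * (3 ^ 3 * Real.exp (2 * k) * p) * k ^ 3 :=
        norm_centralDiffRemainder_le hF hk (hD 3 le_rfl)
      _ = 27 * Real.exp (2 * k) * (2 * k ^ 3) * p := by ring
      _ ≤ 27 * Real.exp 2 * (k * (Real.cosh (2 * k) - 1)) * p := by gcongr; linarith
  · have hkmem : k ∈ Icc (-k) k := ⟨by linarith, le_rfl⟩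
    have hF0 := hD 1 (by norm_num) 0 ⟨by linarith, hk⟩
    have hFk := hD 0 (by norm_num) k hkmem
    have hFk' := hD 0 (by norm_num) (-k) ⟨le_rfl, by linarith⟩
    simp only [iteratedDeriv_zero, iteratedDeriv_one, pow_zero, pow_one, one_mul] at hF0 hFk hFk'
    calc ‖centralDiffRemainder f k‖ ≤ ‖f k‖ + ‖f (-k)‖ + 2 * k * ‖deriv f 0‖ := by
          unfold centralDiffRemainder
          refine (norm_sub_le _ _).trans (add_le_add (norm_sub_le _ _) ?_)
          rw [norm_smul, Real.norm_eq_abs, abs_of_nonneg (by linarith)]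
      _ ≤ 8 * k * Real.exp (2 * k) * p := by
          nlinarith [mul_nonneg (Real.exp_pos (2 * k)).le hp]
      _ ≤ 8 * k * (4 * (Real.cosh (2 * k) - 1)) * p := by
          gcongr; exact exp_two_mul_le_four_mul_cosh_two_mul_sub_one hk1
      _ ≤ 27 * Real.exp 2 * (k * (Real.cosh (2 * k) - 1)) * p := by
          have he2 : 3 ≤ Real.exp 2 := by linarith [Real.add_one_le_exp 2]
          have hkc : 0 ≤ k * (Real.cosh (2 * k) - 1) := (by positivity : 0 ≤ 2 * k ^ 3).trans hcosh
          nlinarith [mul_nonneg hkc hp]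

theorem SchwartzMap.exists_clm_eq_integral_mul {D V α : Type*} [NormedAddCommGroup D]
    [NormedSpace ℝ D] [NormedAddCommGroup V] [NormedSpace ℂ V] [MeasurableSpace α]
    {μ : Measure α} {a : α → ℂ} (ha : Integrable a μ) (L : 𝓢(D, V) →ₗ[ℂ] α → ℂ)
    (hL : ∀ φ, AEStronglyMeasurable (L φ) μ) (s : Finset (ℕ × ℕ)) {C : ℝ} (hC : 0 ≤ C)
    (hbound : ∀ φ, ∀ᵐ x ∂μ, ‖L φ x‖ ≤ C * s.sup (schwartzSeminormFamily ℂ D V) φ) :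
    ∃ T : 𝓢(D, V) →L[ℂ] ℂ, ∀ φ, T φ = ∫ x, a x * L φ x ∂μ := by
  have hdom : ∀ φ, ∀ᵐ x ∂μ, ‖a x * L φ x‖ ≤ ‖a x‖ * (C * s.sup (schwartzSeminormFamily ℂ D V) φ) :=
    fun φ => (hbound φ).mono fun x hx => by
      rw [norm_mul]; exact mul_le_mul_of_nonneg_left hx (norm_nonneg _)
  have hint : ∀ φ, Integrable (fun x => a x * L φ x) μ := fun φ =>
    (ha.norm.mul_const _).mono' (ha.aestronglyMeasurable.mul (hL φ)) (hdom φ)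
  refine ⟨SchwartzMap.mkCLMtoNormedSpace (fun φ => ∫ x, a x * L φ x ∂μ) (fun φ θ => ?_)
    (fun c φ => ?_) ⟨s, (∫ x, ‖a x‖ ∂μ) * C, by positivity, fun φ => ?_⟩, fun φ => rfl⟩
  · simp only [map_add, Pi.add_apply, mul_add]
    exact integral_add (hint φ) (hint θ)
  · simp only [map_smul, Pi.smul_apply, smul_eq_mul, RingHom.id_apply, mul_left_comm _ c]
    exact integral_const_mul c _
  · calc ‖∫ x, a x * L φ x ∂μ‖
        ≤ ∫ x, ‖a x‖ * (C * s.sup (schwartzSeminormFamily ℂ D V) φ) ∂μ :=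
          norm_integral_le_of_norm_le (ha.norm.mul_const _) (hdom φ)
      _ = (∫ x, ‖a x‖ ∂μ) * C * s.sup (schwartzSeminormFamily ℂ D V) φ := by
          rw [integral_mul_const, mul_assoc]

theorem centralDiffRemainder_exp_smul (φ : 𝓢(ℝ, ℂ)) (y k : ℝ) :
    centralDiffRemainder (fun x => Real.exp (-y * x) • φ x) k =
      (Real.exp (-y * k) : ℂ) * φ k - (Real.exp (y * k) : ℂ) * φ (-k) -
        (2 * k : ℝ) • (deriv (⇑φ) 0 - (y : ℂ) * φ 0) := by
  have hexp : HasDerivAt (fun x => Real.exp (-y * x)) (-y) 0 := by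
    simpa using ((hasDerivAt_id (0 : ℝ)).const_mul (-y)).exp
  have hderiv : deriv (fun x => Real.exp (-y * x) • φ x) 0 = _ :=
    (hexp.smul φ.differentiableAt.hasDerivAt).deriv
  rw [centralDiffRemainder, hderiv]
  simp only [Complex.real_smul, mul_zero, Real.exp_zero, neg_mul, mul_neg, neg_neg]
  push_cast
  ring

theorem differentiableAt_exp_mul_smul (φ : 𝓢(ℝ, ℂ)) (y x : ℝ) :
    DifferentiableAt ℝ (fun t => Real.exp (-y * t) • φ t) x :=
  ((by fun_prop : Differentiable ℝ fun t => Real.exp (-y * t)) x).smul φ.differentiableAt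

def tiltedRemainderQuotient (y : ℝ) : 𝓢(ℝ, ℂ) →ₗ[ℂ] ℝ → ℂ where
  toFun φ k := centralDiffRemainder (fun x => Real.exp (-y * x) • φ x) k /
    ((k * (Real.cosh (2 * k) - 1) : ℝ) : ℂ)
  map_add' φ θ := by
    have hsum : (fun x => Real.exp (-y * x) • (φ + θ) x) =
        (fun x => Real.exp (-y * x) • φ x) + fun x => Real.exp (-y * x) • θ x := by
      ext x; simp [smul_add]
    ext k
    simp only [hsum, centralDiffRemainder_add (differentiableAt_exp_mul_smul φ y 0)
      (differentiableAt_exp_mul_smul θ y 0), Pi.add_apply, add_div]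
  map_smul' c φ := by
    have hsmul : (fun x => Real.exp (-y * x) • (c • φ) x) =
        c • fun x => Real.exp (-y * x) • φ x := by
      ext x; exact smul_comm _ c _
    ext k
    simp only [hsmul, centralDiffRemainder_const_smul c (differentiableAt_exp_mul_smul φ y 0),
      Pi.smul_apply, smul_eq_mul, RingHom.id_apply, mul_div_assoc]

theorem norm_tiltedRemainderQuotient_le {y : ℝ} (hy : |y| ≤ 2) (φ : 𝓢(ℝ, ℂ)) {k : ℝ}
    (hk : 0 < k) :
    ‖tiltedRemainderQuotient y φ k‖ ≤
      27 * Real.exp 2 * (({0} ×ˢ Finset.range 4).sup (schwartzSeminormFamily ℂ ℝ ℂ)) φ := by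
  have hpos : 0 < k * (Real.cosh (2 * k) - 1) :=
    (by positivity : 0 < 2 * k ^ 3).trans_le (two_mul_pow_three_le_mul_cosh_two_mul_sub_one hk.le)
  rw [tiltedRemainderQuotient, LinearMap.coe_mk, AddHom.coe_mk, norm_div, Complex.norm_real,
    Real.norm_of_nonneg hpos.le, div_le_iff₀ hpos, mul_right_comm]
  exact φ.norm_centralDiffRemainder_exp_smul_le hy hk.le

theorem aestronglyMeasurable_tiltedRemainderQuotient (y : ℝ) (φ : 𝓢(ℝ, ℂ)) {μ : Measure ℝ} :
    AEStronglyMeasurable (tiltedRemainderQuotient y φ) μ := by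
  have hcont : Continuous (centralDiffRemainder fun x => Real.exp (-y * x) • φ x) := by
    unfold centralDiffRemainder; fun_prop
  exact (hcont.measurable.div (by fun_prop)).aestronglyMeasurable

theorem exists_clm_eq_integral_tilted {g : ℝ → ℝ} (hg : Integrable g) {y : ℝ} (hy : |y| ≤ 2) :
    ∃ T : 𝓢(ℝ, ℂ) →L[ℂ] ℂ, ∀ φ : 𝓢(ℝ, ℂ),
      T φ = ∫ k in Ioi (0 : ℝ),
        ((g k / (k * (Real.cosh (2 * k) - 1)) : ℝ) : ℂ) *
          ((Real.exp (-y * k) : ℂ) * φ k - (Real.exp (y * k) : ℂ) * φ (-k) -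
            (2 * k : ℝ) • (deriv (⇑φ) 0 - (y : ℂ) * φ 0)) := by
  obtain ⟨T, hT⟩ := SchwartzMap.exists_clm_eq_integral_mul (a := fun k => (g k : ℂ))
    hg.ofReal.restrict (tiltedRemainderQuotient y)
    (fun φ => aestronglyMeasurable_tiltedRemainderQuotient y φ) _ (by positivity)
    fun φ => (ae_restrict_iff' measurableSet_Ioi).mpr <|
      .of_forall fun k hk => norm_tiltedRemainderQuotient_le hy φ hk
  refine ⟨T, fun φ => (hT φ).trans (integral_congr_ae (.of_forall fun k => ?_))⟩
  simp only [tiltedRemainderQuotient, LinearMap.coe_mk, AddHom.coe_mk]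
  rw [centralDiffRemainder_exp_smul, Complex.ofReal_div, Complex.real_smul]
  ring

end

theorem eta_tempered_general (g : ℝ → ℝ) (hg : Integrable g) :
    (∃ T : SchwartzMap ℝ ℂ →L[ℂ] ℂ, ∀ φ : SchwartzMap ℝ ℂ,
      T φ = ∫ k in Set.Ioi (0 : ℝ),
        ((g k / (k * (Real.cosh (2 * k) - 1)) : ℝ) : ℂ) *
          (φ k - φ (-k) - (2 * k : ℝ) • deriv (⇑φ) 0)) ∧
    (∀ y : ℝ, |y| ≤ 2 → ∃ T : SchwartzMap ℝ ℂ →L[ℂ] ℂ, ∀ φ : SchwartzMap ℝ ℂ,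
      T φ = ∫ k in Set.Ioi (0 : ℝ),
        ((g k / (k * (Real.cosh (2 * k) - 1)) : ℝ) : ℂ) *
          ((Real.exp (-y * k) : ℂ) * φ k - (Real.exp (y * k) : ℂ) * φ (-k) -
            (2 * k : ℝ) • (deriv (⇑φ) 0 - (y : ℂ) * φ 0))) := by
  refine ⟨?_, fun y hy => exists_clm_eq_integral_tilted hg hy⟩
  obtain ⟨T, hT⟩ := exists_clm_eq_integral_tilted hg (y := 0) (by simp)
  exact ⟨T, fun φ => by simpa using hT φ⟩

theorem eta_tempered (g : ℝ → ℝ) (hg : Integrable g) (heven : ∀ k, g (-k) = g k) :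
    (∃ T : SchwartzMap ℝ ℂ →L[ℂ] ℂ, ∀ φ : SchwartzMap ℝ ℂ,
      T φ = ∫ k in Set.Ioi (0 : ℝ),
        ((g k / (k * (Real.cosh (2 * k) - 1)) : ℝ) : ℂ) *
          (φ k - φ (-k) - (2 * k : ℝ) • deriv (⇑φ) 0)) ∧
    (∀ y : ℝ, |y| ≤ 2 → ∃ T : SchwartzMap ℝ ℂ →L[ℂ] ℂ, ∀ φ : SchwartzMap ℝ ℂ,
      T φ = ∫ k in Set.Ioi (0 : ℝ),
        ((g k / (k * (Real.cosh (2 * k) - 1)) : ℝ) : ℂ) *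
          ((Real.exp (-y * k) : ℂ) * φ k - (Real.exp (y * k) : ℂ) * φ (-k) -
            (2 * k : ℝ) • (deriv (⇑φ) 0 - (y : ℂ) * φ 0))) :=
  eta_tempered_general g hg
end

section
/- Let 1 ≤ p ≤ ∞ and let h be holomorphic on the strip S = {x+iy : 0 < y < 1} with ‖h‖_{H^{p,2}} := sup_{0<y<1} inf{ (1/(1−y))‖f_y‖_{L^p} + (1/y)‖g_y‖_{L²} : f_y + g_y = h(· + iy) } < ∞. Then for every z = x + iy ∈ S, |h(z)| ≲ ‖h‖_{H^{p,2}} ( y^{-1/p} + (1−y)^{-1/2} ). -/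
/-!
By the mean value property, `|h(z)|` is at most the average of `|h|` over the disc of radius
`r = min(y, 1 - y) / 2` around `z = x₀ + iy`, hence at most `(π r²)⁻¹` times the integral of `|h|`
over the enclosing square. Integrate over the square line by line: at height `q` split
`h(· + iq) = f + g`, so that Hölder's inequality bounds `∫_{|x - x₀| < r} |h(x + iq)| dx` by
`(2r)^{1 - 1/p} ‖f‖_p + (2r)^{1/2} ‖g‖_2 ≤ N ((1 - q) (2r)^{1 - 1/p} + q (2r)^{1/2})`.
As `|q - y| < r`, the weights `1 - q ≲ 1 - y` and `q ≲ y` absorb the surplus powers of `r`,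
which leaves `|h(z)| ≲ N (y^{-1/p} + (1 - y)^{-1/2})`.
-/

open MeasureTheory Complex Metric Real Set Filter Topology
open scoped ENNReal

theorem setLIntegral_enorm_le_eLpNorm_mul {α F : Type*} [MeasurableSpace α] {μ : Measure α}
    [NormedAddCommGroup F] {f : α → F} {p : ℝ≥0∞} (hp : 1 ≤ p)
    (hf : AEStronglyMeasurable f μ) (s : Set α) :
    ∫⁻ x in s, ‖f x‖ₑ ∂μ ≤ eLpNorm f p μ * μ s ^ (1 - p.toReal⁻¹) := by
  calc ∫⁻ x in s, ‖f x‖ₑ ∂μ = eLpNorm f 1 (μ.restrict s) := eLpNorm_one_eq_lintegral_enorm.symm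
    _ ≤ eLpNorm f p (μ.restrict s) * μ.restrict s univ ^ (1 / (1 : ℝ≥0∞).toReal - 1 / p.toReal) :=
        eLpNorm_le_eLpNorm_mul_rpow_measure_univ hp hf.restrict
    _ ≤ eLpNorm f p μ * μ s ^ (1 - p.toReal⁻¹) := by
        rw [Measure.restrict_apply_univ]
        simp only [ENNReal.toReal_one, div_one, one_div]
        gcongr
        exact Measure.restrict_le_self

theorem ENNReal.le_ofReal_mul_of_ofReal_one_div_mul_le {x : ℝ≥0∞} {a b : ℝ} (ha : 0 < a)
    (hx : ENNReal.ofReal (1 / a) * x ≤ ENNReal.ofReal b) : x ≤ ENNReal.ofReal (a * b) := by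
  rwa [one_div, ENNReal.ofReal_inv_of_pos ha, ENNReal.inv_mul_le_iff (by simpa using ha)
    ENNReal.ofReal_ne_top, ← ENNReal.ofReal_mul ha.le] at hx

-- Only the inequality is claimed, so no measurability of `F` is needed.
theorem setLIntegral_reProdIm_le (F : ℂ → ℝ≥0∞) (s t : Set ℝ) :
    ∫⁻ w in s ×ℂ t, F w ≤ ∫⁻ y in t, ∫⁻ x in s, F (x + y * I) := by
  have hcoord := volume_preserving_equiv_real_prod.setLIntegral_comp_preimage_emb
    measurableEquivRealProd.measurableEmbedding (fun p ↦ F (p.1 + p.2 * I)) (s ×ˢ t)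
  simp only [measurableEquivRealProd_apply, re_add_im] at hcoord
  calc ∫⁻ w in s ×ℂ t, F w
      = ∫⁻ p in s ×ˢ t, F (p.1 + p.2 * I) := hcoord
    _ = ∫⁻ p, F (p.2 + p.1 * I) ∂(volume.restrict t).prod (volume.restrict s) := by
        rw [Measure.volume_eq_prod, ← Measure.prod_restrict]
        exact (lintegral_prod_swap (fun p : ℝ × ℝ ↦ F (p.1 + p.2 * I))).symm
    _ ≤ ∫⁻ y in t, ∫⁻ x in s, F (x + y * I) := lintegral_prod_le _

theorem ball_subset_reProdIm (z : ℂ) (r : ℝ) :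
    ball z r ⊆ Ioo (z.re - r) (z.re + r) ×ℂ Ioo (z.im - r) (z.im + r) := by
  intro w hw
  rw [mem_ball, Complex.dist_eq] at hw
  have hre := (abs_re_le_norm (w - z)).trans_lt hw
  have him := (abs_im_le_norm (w - z)).trans_lt hw
  rw [sub_re, abs_sub_lt_iff] at hre
  rw [sub_im, abs_sub_lt_iff] at him
  exact ⟨⟨by linarith, by linarith⟩, ⟨by linarith, by linarith⟩⟩

theorem polarCoord_symm_eq_circleMap (c : ℂ) (ρ θ : ℝ) :
    c + Complex.polarCoord.symm (ρ, θ) = circleMap c ρ θ := by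
  rw [Complex.polarCoord_symm_apply, circleMap, Complex.exp_mul_I, ← Complex.ofReal_cos,
    ← Complex.ofReal_sin]

theorem setLIntegral_ball_eq_lintegral_circleMap {F : ℂ → ℝ≥0∞} {c : ℂ} {r : ℝ}
    (hF : ContinuousOn F (ball c r)) :
    ∫⁻ w in ball c r, F w
      = ∫⁻ ρ in Ioo 0 r, ENNReal.ofReal ρ * ∫⁻ θ in Ioo (-π) π, F (circleMap c ρ θ) := by
  set R := Ioo 0 r ×ˢ Ioo (-π) π
  have hR : MeasurableSet R := measurableSet_Ioo.prod measurableSet_Ioo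
  set G : ℝ × ℝ → ℝ≥0∞ := fun p ↦ ENNReal.ofReal p.1 * F (circleMap c p.1 p.2)
  have hpolar : ∀ p ∈ polarCoord.target,
      ENNReal.ofReal p.1 • (ball c r).indicator F (c + Complex.polarCoord.symm p)
        = R.indicator G p := by
    rintro ⟨ρ, θ⟩ ⟨hρ, hθ⟩
    simp only [Set.mem_Ioi] at hρ
    simp only [polarCoord_symm_eq_circleMap, Set.indicator, mem_ball, Complex.dist_eq,
      circleMap_sub_center, norm_circleMap_zero, abs_of_pos hρ]
    simp [R, G, hρ, hθ]
  have hG : AEMeasurable G (volume.restrict R) := by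
    have hmaps : MapsTo (fun p : ℝ × ℝ ↦ circleMap c p.1 p.2) R (ball c r) := by
      rintro ⟨ρ, θ⟩ ⟨hρ, -⟩
      simpa [circleMap_sub_center, Complex.dist_eq, abs_of_pos hρ.1] using hρ.2
    have hcont : Continuous fun p : ℝ × ℝ ↦ circleMap c p.1 p.2 := by
      unfold circleMap; fun_prop
    exact (ENNReal.measurable_ofReal.comp measurable_fst).aemeasurable.mul
      ((hF.comp hcont.continuousOn hmaps).aemeasurable hR)
  calc ∫⁻ w in ball c r, F w = ∫⁻ w, (ball c r).indicator F (c + w) := by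
        rw [← lintegral_indicator measurableSet_ball, lintegral_add_left_eq_self]
    _ = ∫⁻ p in polarCoord.target, R.indicator G p := by
        rw [← Complex.lintegral_comp_polarCoord_symm, setLIntegral_congr_fun
          polarCoord.open_target.measurableSet hpolar]
    _ = ∫⁻ p in R, G p := by
        rw [lintegral_indicator hR, Measure.restrict_restrict hR, Set.inter_eq_left.2]
        exact prod_mono Ioo_subset_Ioi_self subset_rfl
    _ = _ := by
        rw [Measure.volume_eq_prod, setLIntegral_prod _ (by rwa [← Measure.volume_eq_prod])]
        exact lintegral_congr fun ρ ↦ lintegral_const_mul' _ _ ENNReal.ofReal_ne_top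

section MeanValue

variable {E : Type*} [NormedAddCommGroup E] [NormedSpace ℂ E] [CompleteSpace E]

theorem DiffContOnCl.setLIntegral_enorm_center_le {h : ℂ → E} {c : ℂ} {R : ℝ}
    (hh : DiffContOnCl ℂ h (ball c |R|)) :
    ∫⁻ _ in Ioo (-π) π, ‖h c‖ₑ ≤ ∫⁻ θ in Ioo (-π) π, ‖h (circleMap c R θ)‖ₑ := by
  have hmean : h c = (2 * π)⁻¹ • ∫ θ in -π..π, h (circleMap c R θ) := by
    rw [← hh.circleAverage, circleAverage_eq_integral_add (-π),
      intervalIntegral.integral_comp_add_right (fun θ ↦ h (circleMap c R θ))]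
    ring_nf
  have h2π : ‖((2 * π)⁻¹ : ℝ)‖ₑ * ENNReal.ofReal (2 * π) = 1 := by
    rw [← ofReal_norm, Real.norm_of_nonneg (by positivity), ← ENNReal.ofReal_mul
      (by positivity), inv_mul_cancel₀ (by positivity), ENNReal.ofReal_one]
  calc ∫⁻ _ in Ioo (-π) π, ‖h c‖ₑ
      = ‖∫ θ in -π..π, h (circleMap c R θ)‖ₑ := by
        rw [setLIntegral_const, Real.volume_Ioo, sub_neg_eq_add, ← two_mul, hmean, enorm_smul,
          mul_right_comm, h2π, one_mul]
    _ ≤ ∫⁻ θ in Ioc (-π) π, ‖h (circleMap c R θ)‖ₑ := by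
        rw [intervalIntegral.integral_of_le (by linarith [pi_pos])]
        exact enorm_integral_le_lintegral_enorm _
    _ = ∫⁻ θ in Ioo (-π) π, ‖h (circleMap c R θ)‖ₑ := setLIntegral_congr Ioo_ae_eq_Ioc.symm

theorem DiffContOnCl.enorm_mul_volume_ball_le {h : ℂ → E} {c : ℂ} {r : ℝ}
    (hh : DiffContOnCl ℂ h (ball c r)) :
    ‖h c‖ₑ * volume (ball c r) ≤ ∫⁻ w in ball c r, ‖h w‖ₑ := by
  calc ‖h c‖ₑ * volume (ball c r) = ∫⁻ _ in ball c r, ‖h c‖ₑ := by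
        rw [setLIntegral_const, mul_comm]
    _ = ∫⁻ ρ in Ioo 0 r, ENNReal.ofReal ρ * ∫⁻ _ in Ioo (-π) π, ‖h c‖ₑ :=
        setLIntegral_ball_eq_lintegral_circleMap continuousOn_const
    _ ≤ ∫⁻ ρ in Ioo 0 r, ENNReal.ofReal ρ * ∫⁻ θ in Ioo (-π) π, ‖h (circleMap c ρ θ)‖ₑ := by
        refine setLIntegral_mono' measurableSet_Ioo fun ρ hρ ↦ ?_
        rw [← abs_of_pos hρ.1] at hρ
        exact mul_le_mul_right (hh.mono (ball_subset_ball hρ.2.le)).setLIntegral_enorm_center_le _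
    _ = ∫⁻ w in ball c r, ‖h w‖ₑ :=
        (setLIntegral_ball_eq_lintegral_circleMap hh.differentiableOn.continuousOn.enorm).symm

theorem DiffContOnCl.area_mul_norm_le_of_horizontal_lintegral_le {h : ℂ → E} {z : ℂ} {r M : ℝ}
    (hh : DiffContOnCl ℂ h (ball z r)) (hr : 0 ≤ r) (hM : 0 ≤ M)
    (hline : ∀ q ∈ Ioo (z.im - r) (z.im + r),
      ∫⁻ x in Ioo (z.re - r) (z.re + r), ‖h (x + q * I)‖ₑ ≤ ENNReal.ofReal M) :
    π * r ^ 2 * ‖h z‖ ≤ 2 * r * M := by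
  have hlint : ‖h z‖ₑ * volume (ball z r) ≤ ENNReal.ofReal (2 * r) * ENNReal.ofReal M :=
    calc ‖h z‖ₑ * volume (ball z r) ≤ ∫⁻ w in ball z r, ‖h w‖ₑ := hh.enorm_mul_volume_ball_le
      _ ≤ ∫⁻ w in Ioo (z.re - r) (z.re + r) ×ℂ Ioo (z.im - r) (z.im + r), ‖h w‖ₑ :=
        lintegral_mono_set (ball_subset_reProdIm z r)
      _ ≤ ∫⁻ q in Ioo (z.im - r) (z.im + r), ∫⁻ x in Ioo (z.re - r) (z.re + r),
            ‖h (x + q * I)‖ₑ := setLIntegral_reProdIm_le _ _ _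
      _ ≤ ∫⁻ _ in Ioo (z.im - r) (z.im + r), ENNReal.ofReal M :=
        setLIntegral_mono' measurableSet_Ioo hline
      _ = ENNReal.ofReal (2 * r) * ENNReal.ofReal M := by
        rw [setLIntegral_const, Real.volume_Ioo, mul_comm]; ring_nf
  rw [Complex.volume_ball, ← ofReal_norm, ← ENNReal.ofReal_pow hr, ← ENNReal.ofReal_coe_nnreal,
    NNReal.coe_real_pi, ← ENNReal.ofReal_mul (sq_nonneg r), ← ENNReal.ofReal_mul (norm_nonneg _),
    ← ENNReal.ofReal_mul (by positivity), ENNReal.ofReal_le_ofReal_iff (by positivity)] at hlint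
  linarith

end MeanValue

theorem mul_rpow_neg_min_le {u v a : ℝ} (hu : 0 < u) (hu1 : u ≤ 1) (hv : 0 < v) (hv1 : v ≤ 1)
    (ha : 0 ≤ a) (ha1 : a ≤ 1) : u * min u v ^ (-a) ≤ v ^ (-a) := by
  rcases le_total u v with huv | hvu
  · rw [min_eq_left huv]
    calc u * u ^ (-a) = u ^ (1 - a) := by
          rw [sub_eq_add_neg, rpow_add hu, rpow_one]
      _ ≤ 1 := rpow_le_one hu.le hu1 (by linarith)
      _ ≤ v ^ (-a) := one_le_rpow_of_pos_of_le_one_of_nonpos hv hv1 (by linarith)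
  · rw [min_eq_right hvu]
    exact mul_le_of_le_one_left (rpow_nonneg hv.le _) hu1

theorem min_rpow_weights_le {y a : ℝ} (hy0 : 0 < y) (hy1 : y < 1) (ha0 : 0 ≤ a) (ha1 : a ≤ 1) :
    (1 - y + min y (1 - y) / 2) * min y (1 - y) ^ (1 - a)
        + (y + min y (1 - y) / 2) * min y (1 - y) ^ (1 / 2 : ℝ)
      ≤ 3 / 2 * min y (1 - y) * (y ^ (-a) + (1 - y) ^ (-(1 / 2 : ℝ))) := by
  set m := min y (1 - y)
  have hm : 0 < m := lt_min hy0 (sub_pos.2 hy1)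
  have hrpow : ∀ b : ℝ, m ^ (1 - b) = m * m ^ (-b) := fun b ↦ by
    rw [sub_eq_add_neg, rpow_add hm, rpow_one]
  have hsqrt : m ^ (1 / 2 : ℝ) = m * m ^ (-(1 / 2 : ℝ)) := by rw [← hrpow]; norm_num
  have hfar : (1 - y) * m ^ (-a) ≤ y ^ (-a) := by
    simpa only [m, min_comm] using
      mul_rpow_neg_min_le (sub_pos.2 hy1) (by linarith) hy0 hy1.le ha0 ha1
  have hnear : y * m ^ (-(1 / 2 : ℝ)) ≤ (1 - y) ^ (-(1 / 2 : ℝ)) :=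
    mul_rpow_neg_min_le hy0 hy1.le (sub_pos.2 hy1) (by linarith) (by norm_num) (by norm_num)
  have h1 : 1 - y + m / 2 ≤ 3 / 2 * (1 - y) := by linarith [min_le_right y (1 - y)]
  have h2 : y + m / 2 ≤ 3 / 2 * y := by linarith [min_le_left y (1 - y)]
  calc (1 - y + m / 2) * m ^ (1 - a) + (y + m / 2) * m ^ (1 / 2 : ℝ)
      ≤ 3 / 2 * (1 - y) * (m * m ^ (-a)) + 3 / 2 * y * (m * m ^ (-(1 / 2 : ℝ))) := by
        rw [hrpow, hsqrt]; gcongr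
    _ = 3 / 2 * m * ((1 - y) * m ^ (-a) + y * m ^ (-(1 / 2 : ℝ))) := by ring
    _ ≤ 3 / 2 * m * (y ^ (-a) + (1 - y) ^ (-(1 / 2 : ℝ))) := by gcongr

theorem ENNReal.toReal_inv_le_one {p : ℝ≥0∞} (hp : 1 ≤ p) : p.toReal⁻¹ ≤ 1 := by
  rcases eq_or_ne p ⊤ with rfl | hp_top
  · simp
  · exact inv_le_one_of_one_le₀ (ENNReal.toReal_one ▸ ENNReal.toReal_mono hp_top hp)

theorem closure_ball_subset_strip {z : ℂ} {r : ℝ} (hr0 : r < z.im) (hr1 : r < 1 - z.im) :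
    closure (ball z r) ⊆ {w : ℂ | 0 < w.im ∧ w.im < 1} := by
  intro w hw
  have hdist := (abs_im_le_norm (w - z)).trans
    (Complex.dist_eq w z ▸ mem_closedBall.1 (closure_ball_subset_closedBall hw))
  rw [sub_im, abs_le] at hdist
  constructor <;> linarith

/-- The infimum defining `‖h‖_{H^{p,2}}` at height `y` is at most `M`. -/
def HasWeightedSplitting (p : ℝ≥0∞) (h : ℂ → ℂ) (y M : ℝ) : Prop :=
  ∃ f g : ℝ → ℂ,
    MemLp f p (volume : Measure ℝ) ∧ MemLp g 2 (volume : Measure ℝ) ∧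
    (∀ x : ℝ, f x + g x = h (x + y * Complex.I)) ∧
    ENNReal.ofReal (1 / (1 - y)) * eLpNorm f p volume +
        ENNReal.ofReal (1 / y) * eLpNorm g 2 volume ≤ ENNReal.ofReal M

theorem HasWeightedSplitting.setLIntegral_le {p : ℝ≥0∞} {h : ℂ → ℂ} {y M : ℝ}
    (hsplit : HasWeightedSplitting p h y M) (hp : 1 ≤ p) (hy0 : 0 < y) (hy1 : y < 1)
    (s : Set ℝ) :
    ∫⁻ x in s, ‖h (x + y * I)‖ₑ ≤ ENNReal.ofReal ((1 - y) * M) * volume s ^ (1 - p.toReal⁻¹)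
      + ENNReal.ofReal (y * M) * volume s ^ (1 / 2 : ℝ) := by
  obtain ⟨f, g, hf, hg, hfg, hcost⟩ := hsplit
  have hfM : eLpNorm f p volume ≤ ENNReal.ofReal ((1 - y) * M) :=
    ENNReal.le_ofReal_mul_of_ofReal_one_div_mul_le (sub_pos.2 hy1) (le_self_add.trans hcost)
  have hgM : eLpNorm g 2 volume ≤ ENNReal.ofReal (y * M) :=
    ENNReal.le_ofReal_mul_of_ofReal_one_div_mul_le hy0 (le_add_self.trans hcost)
  calc ∫⁻ x in s, ‖h (x + y * I)‖ₑ ≤ ∫⁻ x in s, ‖f x‖ₑ + ‖g x‖ₑ := by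
        simp_rw [← hfg]; exact lintegral_mono fun x ↦ enorm_add_le _ _
    _ = (∫⁻ x in s, ‖f x‖ₑ) + ∫⁻ x in s, ‖g x‖ₑ :=
        lintegral_add_left' hf.aestronglyMeasurable.enorm.restrict _
    _ ≤ eLpNorm f p volume * volume s ^ (1 - p.toReal⁻¹)
          + eLpNorm g 2 volume * volume s ^ (1 - (2 : ℝ≥0∞).toReal⁻¹) :=
        add_le_add (setLIntegral_enorm_le_eLpNorm_mul hp hf.aestronglyMeasurable s)
          (setLIntegral_enorm_le_eLpNorm_mul one_le_two hg.aestronglyMeasurable s)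
    _ ≤ _ := by
        norm_num
        gcongr

theorem HasWeightedSplitting.setLIntegral_Ioo_le {p : ℝ≥0∞} {h : ℂ → ℂ} {q M : ℝ}
    (hsplit : HasWeightedSplitting p h q M) (hp : 1 ≤ p) (hq0 : 0 < q) (hq1 : q < 1) (hM : 0 ≤ M)
    (x₀ : ℝ) {y r : ℝ} (hr : 0 < r) (hq : q ∈ Ioo (y - r) (y + r)) :
    ∫⁻ x in Ioo (x₀ - r) (x₀ + r), ‖h (x + q * I)‖ₑ ≤ ENNReal.ofReal
      (M * ((1 - y + r) * (2 * r) ^ (1 - p.toReal⁻¹) + (y + r) * (2 * r) ^ (1 / 2 : ℝ))) := by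
  refine (hsplit.setLIntegral_le hp hq0 hq1 _).trans ?_
  rw [Real.volume_Ioo, show x₀ + r - (x₀ - r) = 2 * r by ring,
    ENNReal.ofReal_rpow_of_pos (by positivity), ENNReal.ofReal_rpow_of_pos (by positivity),
    ← ENNReal.ofReal_mul (mul_nonneg (sub_pos.2 hq1).le hM), ← ENNReal.ofReal_mul (by positivity),
    ← ENNReal.ofReal_add (by positivity) (by positivity)]
  refine ENNReal.ofReal_le_ofReal ?_
  calc (1 - q) * M * (2 * r) ^ (1 - p.toReal⁻¹) + q * M * (2 * r) ^ (1 / 2 : ℝ)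
      = M * ((1 - q) * (2 * r) ^ (1 - p.toReal⁻¹) + q * (2 * r) ^ (1 / 2 : ℝ)) := by ring
    _ ≤ M * ((1 - y + r) * (2 * r) ^ (1 - p.toReal⁻¹) + (y + r) * (2 * r) ^ (1 / 2 : ℝ)) := by
      gcongr <;> linarith [hq.1, hq.2]

theorem norm_le_of_hasWeightedSplitting {p : ℝ≥0∞} {h : ℂ → ℂ} {M : ℝ} (hp : 1 ≤ p)
    (hh : DifferentiableOn ℂ h {z : ℂ | 0 < z.im ∧ z.im < 1}) (hM : 0 ≤ M)
    (hsplit : ∀ y, 0 < y → y < 1 → HasWeightedSplitting p h y M) {z : ℂ} (hz0 : 0 < z.im)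
    (hz1 : z.im < 1) :
    ‖h z‖ ≤ 2 * M * (z.im ^ (-p.toReal⁻¹) + (1 - z.im) ^ (-(1 / 2 : ℝ))) := by
  set y := z.im
  set a := p.toReal⁻¹
  set m := min y (1 - y)
  have hm : 0 < m := lt_min hz0 (sub_pos.2 hz1)
  have hdisc : DiffContOnCl ℂ h (ball z (m / 2)) :=
    (hh.mono (closure_ball_subset_strip (by linarith [min_le_left y (1 - y)])
      (by linarith [min_le_right y (1 - y)]))).diffContOnCl
  have hline : ∀ q ∈ Ioo (y - m / 2) (y + m / 2),
      ∫⁻ x in Ioo (z.re - m / 2) (z.re + m / 2), ‖h (x + q * I)‖ₑ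
        ≤ ENNReal.ofReal (M * ((1 - y + m / 2) * m ^ (1 - a) + (y + m / 2) * m ^ (1 / 2 : ℝ))) := by
    intro q hq
    have hq0 : 0 < q := by linarith [hq.1, min_le_left y (1 - y)]
    have hq1 : q < 1 := by linarith [hq.2, min_le_right y (1 - y)]
    have hbound := (hsplit q hq0 hq1).setLIntegral_Ioo_le hp hq0 hq1 hM z.re (by positivity) hq
    rwa [show 2 * (m / 2) = m by ring] at hbound
  have harea := hdisc.area_mul_norm_le_of_horizontal_lintegral_le (by positivity) (by positivity)
    hline
  have hweight := min_rpow_weights_le hz0 hz1 (by positivity) (ENNReal.toReal_inv_le_one hp)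
  set S := y ^ (-a) + (1 - y) ^ (-(1 / 2 : ℝ))
  have hS : 0 ≤ S := by positivity
  have key : π * m ^ 2 * ‖h z‖ ≤ π * m ^ 2 * (2 * M * S) := by
    calc π * m ^ 2 * ‖h z‖ = 4 * (π * (m / 2) ^ 2 * ‖h z‖) := by ring
      _ ≤ 4 * (m * (M * (3 / 2 * m * S))) := by
        rw [show 2 * (m / 2) = m by ring] at harea
        grw [harea, hweight]
      _ ≤ π * m ^ 2 * (2 * M * S) := by
        nlinarith [pi_gt_three, mul_nonneg (mul_nonneg (sq_nonneg m) hM) hS]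
  exact le_of_mul_le_mul_left key (by positivity)

theorem uniform_estimate_Hp2 :
    ∃ C : ℝ, 0 < C ∧
      ∀ p : ℝ≥0∞, 1 ≤ p →
        ∀ h : ℂ → ℂ, DifferentiableOn ℂ h {z : ℂ | 0 < z.im ∧ z.im < 1} →
          ∀ N : ℝ, 0 ≤ N →
            (∀ y : ℝ, 0 < y → y < 1 → ∀ ε : ℝ, 0 < ε →
              ∃ f g : ℝ → ℂ,
                MemLp f p (volume : Measure ℝ) ∧ MemLp g 2 (volume : Measure ℝ) ∧
                (∀ x : ℝ, f x + g x = h (x + y * Complex.I)) ∧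
                ENNReal.ofReal (1 / (1 - y)) * eLpNorm f p volume +
                    ENNReal.ofReal (1 / y) * eLpNorm g 2 volume ≤
                  ENNReal.ofReal (N + ε)) →
            ∀ z : ℂ, 0 < z.im → z.im < 1 →
              ‖h z‖ ≤ C * N * (z.im ^ (-(p.toReal)⁻¹) + (1 - z.im) ^ (-(1 / 2 : ℝ))) := by
  refine ⟨2, two_pos, fun p hp h hh N hN hsplit z hz0 hz1 ↦ ?_⟩
  set S := z.im ^ (-p.toReal⁻¹) + (1 - z.im) ^ (-(1 / 2 : ℝ))
  have hε : ∀ ε > 0, ‖h z‖ ≤ 2 * (N + ε) * S := fun ε hε ↦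
    norm_le_of_hasWeightedSplitting hp hh (by positivity) (fun y hy0 hy1 ↦ hsplit y hy0 hy1 ε hε)
      hz0 hz1
  have hlim : Tendsto (fun ε ↦ 2 * (N + ε) * S) (𝓝[>] 0) (𝓝 (2 * (N + 0) * S)) :=
    (Continuous.tendsto (by fun_prop) 0).mono_left nhdsWithin_le_nhds
  simpa using ge_of_tendsto hlim (eventually_nhdsWithin_of_forall hε)
end
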